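/- arXiv:1403.4480 — 8 statements merged into one kernel-verified Lean document; each statement's English description precedes it below -/
import Mathlib

section
/- A compact Hausdorff space with a countable network is metrizable. -/
/-- A network of a topological space: every open set is a union of members. -/
def IsNetwork {T : Type*} [TopologicalSpace T] (N : Set (Set T)) : Prop :=
  ∀ U : Set T, IsOpen U → ∃ M ⊆ N, U = ⋃₀ M

theorem compact_T2_countable_network_metrizable
    {X : Type*} [TopologicalSpace X] [CompactSpace X] [T2Space X]
    (hnet : ∃ N : Set (Set X), N.Countable ∧ IsNetwork N) :
    TopologicalSpace.MetrizableSpace X := by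
  obtain ⟨N, hNc, hN⟩ := hnet
  -- pairs of network elements with disjoint closures
  set P : Set (Set X × Set X) :=
    {p | p.1 ∈ N ∧ p.2 ∈ N ∧ Disjoint (closure p.1) (closure p.2)} with hP
  have hPc : P.Countable :=
    (hNc.prod hNc).mono (fun p hp => Set.mem_prod.2 ⟨hp.1, hp.2.1⟩)
  have key : ∀ p : P, ∃ u v : Set X, IsOpen u ∧ IsOpen v ∧
      closure (p.1.1) ⊆ u ∧ closure (p.1.2) ⊆ v ∧ Disjoint u v := by
    rintro ⟨⟨A, B⟩, hA, hB, hd⟩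
    obtain ⟨u, v, hu, hv, h1, h2, h3⟩ := normal_separation isClosed_closure isClosed_closure hd
    exact ⟨u, v, hu, hv, h1, h2, h3⟩
  choose U V hUo hVo hU hV hUV using key
  haveI := hPc.to_subtype
  -- the candidate basis: finite intersections of the U's
  set B : Set (Set X) := {s | ∃ F : Set (Set X), F.Finite ∧ F ⊆ Set.range U ∧ s = ⋂₀ F} with hB
  have hBc : B.Countable := by
    have : B ⊆ (fun F : Set (Set X) => ⋂₀ F) '' {F | F.Finite ∧ F ⊆ Set.range U} := by
      rintro s ⟨F, hF1, hF2, rfl⟩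
      exact ⟨F, ⟨hF1, hF2⟩, rfl⟩
    exact ((Set.countable_setOf_finite_subset (Set.countable_range U)).image _).mono this
  have hbasis : TopologicalSpace.IsTopologicalBasis B := by
    apply TopologicalSpace.isTopologicalBasis_of_isOpen_of_nhds
    · rintro s ⟨F, hF1, hF2, rfl⟩
      exact Set.Finite.isOpen_sInter hF1 (fun t ht => by
        obtain ⟨p, rfl⟩ := hF2 ht; exact hUo p)
    · intro x W hxW hW
      -- for each y ∉ W, find a pair p with x ∈ U p, y ∈ V p
      have step : ∀ y : ↥(Wᶜ), ∃ p : P, x ∈ U p ∧ (y : X) ∈ V p := by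
        rintro ⟨y, hy⟩
        have hxy : x ≠ y := fun h => hy (h ▸ hxW)
        obtain ⟨u, hxu, hu, v, hyv, hv, hdis⟩ := exists_open_nhds_disjoint_closure hxy
        obtain ⟨Mu, hMu, hMueq⟩ := hN u hu
        obtain ⟨Mv, hMv, hMveq⟩ := hN v hv
        rw [hMueq] at hxu
        rw [hMveq] at hyv
        obtain ⟨A, hA, hxA⟩ := hxu
        obtain ⟨C, hC, hyC⟩ := hyv
        have hAu : A ⊆ u := hMueq ▸ Set.subset_sUnion_of_mem hA
        have hCv : C ⊆ v := hMveq ▸ Set.subset_sUnion_of_mem hC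
        have hp : (A, C) ∈ P :=
          ⟨hMu hA, hMv hC, hdis.mono (closure_mono hAu) (closure_mono hCv)⟩
        exact ⟨⟨(A, C), hp⟩, hU _ (subset_closure hxA), hV _ (subset_closure hyC)⟩
      choose g hgx hgy using step
      have hcpt : IsCompact Wᶜ := hW.isClosed_compl.isCompact
      have hcover : Wᶜ ⊆ ⋃ y : ↥(Wᶜ), V (g y) := fun y hy =>
        Set.mem_iUnion.2 ⟨⟨y, hy⟩, hgy ⟨y, hy⟩⟩
      obtain ⟨t, hcov⟩ := hcpt.elim_finite_subcover _ (fun y => hVo (g y)) hcover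
      refine ⟨⋂₀ ((U ∘ g) '' ↑t), ⟨(U ∘ g) '' ↑t, t.finite_toSet.image _, ?_, rfl⟩, ?_, ?_⟩
      · rintro s ⟨y, _, rfl⟩; exact ⟨g y, rfl⟩
      · rintro s ⟨y, hy, rfl⟩; exact hgx y
      · intro z hz
        by_contra hzW
        obtain ⟨y, hyt, hzV⟩ := Set.mem_iUnion₂.1 (hcov hzW)
        exact (hUV (g y)).le_bot ⟨hz _ ⟨y, hyt, rfl⟩, hzV⟩
  haveI : SecondCountableTopology X := hbasis.secondCountableTopology hBc
  infer_instance
end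

section
/- Let X be a regular topological space of countable tightness in which every separable subset has a countable network, and let A ⊆ X be countably compact. Then A is closed in X. -/
/-- A subset `S` of a topological space is countably compact if every countable
open cover of `S` has a finite subcover. -/
def IsCountablyCompactSet {X : Type*} [TopologicalSpace X] (S : Set X) : Prop :=
  ∀ U : ℕ → Set X, (∀ n, IsOpen (U n)) → S ⊆ ⋃ n, U n →
    ∃ t : Finset ℕ, S ⊆ ⋃ n ∈ t, U n

/-- A space has countable tightness if every point in the closure of a set is in
the closure of a countable subset. -/
def CountableTightness (X : Type*) [TopologicalSpace X] : Prop :=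
  ∀ (A : Set X) (a : X), a ∈ closure A → ∃ S ⊆ A, S.Countable ∧ a ∈ closure S

theorem countablyCompact_subset_closed_of_tightness_monolithic
    {X : Type*} [TopologicalSpace X] [T2Space X] [RegularSpace X]
    (htight : CountableTightness X)
    (hmono : ∀ S : Set X, (∃ C ⊆ S, C.Countable ∧ S ⊆ closure C) →
      ∃ N : Set (Set S), N.Countable ∧ IsNetwork N)
    (A : Set X) (hA : IsCountablyCompactSet A) :
    IsClosed A := by
  classical
  apply isClosed_of_closure_subset
  intro a ha
  obtain ⟨S, hSA, hScount, haS⟩ := htight A a ha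
  set T : Set X := A ∩ closure S with hTdef
  have hST : S ⊆ T := fun x hx => ⟨hSA hx, subset_closure hx⟩
  have hTne : T.Nonempty := by
    rcases S.eq_empty_or_nonempty with h | ⟨x, hx⟩
    · rw [h] at haS; simp at haS
    · exact ⟨x, hST hx⟩
  -- T is countably compact
  have hTcc : IsCountablyCompactSet T := by
    intro U hU hcov
    have hU' : ∀ n, IsOpen (U n ∪ (closure S)ᶜ) := fun n =>
      (hU n).union isClosed_closure.isOpen_compl
    have hcov' : A ⊆ ⋃ n, (U n ∪ (closure S)ᶜ) := by
      intro x hx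
      by_cases hxc : x ∈ closure S
      · obtain ⟨n, hn⟩ := Set.mem_iUnion.1 (hcov ⟨hx, hxc⟩)
        exact Set.mem_iUnion.2 ⟨n, Or.inl hn⟩
      · exact Set.mem_iUnion.2 ⟨0, Or.inr hxc⟩
    obtain ⟨t, ht⟩ := hA _ hU' hcov'
    refine ⟨t, fun x hx => ?_⟩
    obtain ⟨n, hn, hxn⟩ := Set.mem_iUnion₂.1 (ht hx.1)
    rcases hxn with h | h
    · exact Set.mem_iUnion₂.2 ⟨n, hn, h⟩
    · exact absurd hx.2 h
  -- T has a countable network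
  obtain ⟨N, hNc, hNnet⟩ := hmono T ⟨S, hST, hScount, fun x hx => hx.2⟩
  -- T is compact
  have hTcompact : IsCompact T := by
    apply isCompact_of_finite_subcover
    intro ι U hU hcov
    obtain ⟨x₀, hx₀⟩ := hTne
    obtain ⟨i₀, _⟩ := Set.mem_iUnion.1 (hcov hx₀)
    -- choose for each network element a covering index if possible
    have hchoice : ∀ M : Set T, ∃ i,
        (∃ j, M ⊆ Subtype.val ⁻¹' U j) → M ⊆ Subtype.val ⁻¹' U i := by
      intro M
      by_cases h : ∃ j, M ⊆ Subtype.val ⁻¹' U j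
      · exact ⟨h.choose, fun _ => h.choose_spec⟩
      · exact ⟨i₀, fun h' => absurd h' h⟩
    choose f hf using hchoice
    set N' : Set (Set T) := {M ∈ N | ∃ i, M ⊆ Subtype.val ⁻¹' U i} with hN'def
    have hmem : ∀ x : T, ∃ M ∈ N', x ∈ M := by
      intro x
      obtain ⟨i, hi⟩ := Set.mem_iUnion.1 (hcov x.2)
      obtain ⟨Ms, hMsN, hMs⟩ := hNnet (Subtype.val ⁻¹' U i)
        ((hU i).preimage continuous_subtype_val)
      have : x ∈ ⋃₀ Ms := by rw [← hMs]; exact hi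
      obtain ⟨M, hMMs, hxM⟩ := this
      exact ⟨M, ⟨hMsN hMMs, ⟨i, by rw [hMs]; exact Set.subset_sUnion_of_mem hMMs⟩⟩, hxM⟩
    have hN'ne : N'.Nonempty := by
      obtain ⟨M, hM, _⟩ := hmem ⟨x₀, hx₀⟩
      exact ⟨M, hM⟩
    obtain ⟨g, hg⟩ := (hNc.mono (Set.sep_subset _ _)).exists_eq_range hN'ne
    -- countable open cover of T
    have hcovT : T ⊆ ⋃ n, U (f (g n)) := by
      intro x hx
      obtain ⟨M, hMN', hxM⟩ := hmem ⟨x, hx⟩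
      have : M ∈ Set.range g := hg ▸ hMN'
      obtain ⟨n, rfl⟩ := this
      have hex : ∃ i, g n ⊆ Subtype.val ⁻¹' U i := hMN'.2
      have : (⟨x, hx⟩ : T) ∈ Subtype.val ⁻¹' U (f (g n)) := hf (g n) hex hxM
      exact Set.mem_iUnion.2 ⟨n, this⟩
    obtain ⟨t, ht⟩ := hTcc (fun n => U (f (g n))) (fun n => hU _) hcovT
    refine ⟨t.image (fun n => f (g n)), fun x hx => ?_⟩
    obtain ⟨n, hn, hxn⟩ := Set.mem_iUnion₂.1 (ht hx)
    exact Set.mem_iUnion₂.2 ⟨f (g n), Finset.mem_image_of_mem _ hn, hxn⟩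
  have hTclosed : IsClosed T := hTcompact.isClosed
  have haT : a ∈ T := hTclosed.closure_subset (closure_mono hST haS)
  exact haT.1
end

section
/- Let X be a topological space and r : X → X a continuous retraction with compact range r[X]. Let S ⊆ C(X, ℝ) separate the points of r[X] and satisfy f ∘ r = f for every f ∈ S. Then the family N(S) of all finite intersections f₁⁻¹(I₁) ∩ … ∩ f_k⁻¹(I_k), where f₁,…,f_k ∈ S and I₁,…,I_k are open intervals with rational endpoints, is a network of the map r, i.e., for every x ∈ X and every open U ⊆ r[X] containing r(x) there exists N ∈ N(S) with x ∈ N and r[N] ⊆ U. -/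
/-- The family of finite intersections of preimages of rational open intervals
under functions from `S`. -/
def NetworkFamily {X : Type*} [TopologicalSpace X] (S : Set C(X, ℝ)) : Set (Set X) :=
  {N | ∃ (k : ℕ) (f : Fin k → C(X, ℝ)) (a b : Fin k → ℚ),
    (∀ i, f i ∈ S) ∧ N = ⋂ i, (f i) ⁻¹' (Set.Ioo (a i : ℝ) (b i : ℝ))}

theorem networkFamily_is_network_of_retraction
    {X : Type*} [TopologicalSpace X]
    (r : X → X) (hr : Continuous r) (hretr : r ∘ r = r)
    (hcomp : IsCompact (Set.range r))
    (S : Set C(X, ℝ))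
    (hsep : ∀ x ∈ Set.range r, ∀ y ∈ Set.range r, x ≠ y → ∃ f ∈ S, f x ≠ f y)
    (hfix : ∀ f ∈ S, (f : X → ℝ) ∘ r = f) :
    ∀ (x : X) (U : Set X), U ⊆ Set.range r →
      IsOpen ((Subtype.val ⁻¹' U : Set (Set.range r))) → r x ∈ U →
      ∃ N ∈ NetworkFamily S, x ∈ N ∧ r '' N ⊆ U := by
  classical
  intro x U hUsub hUopen hxU
  set p := r x with hp
  have hpr : p ∈ Set.range r := ⟨x, rfl⟩
  set K := Set.range r \ U with hK
  have hKey : ∀ y : K, ∃ (f : C(X, ℝ)) (a b : ℚ),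
      f ∈ S ∧ f p ∈ Set.Ioo (a : ℝ) (b : ℝ) ∧ f (y : X) ∉ Set.Icc (a : ℝ) (b : ℝ) := by
    rintro ⟨y, hyr, hyU⟩
    have hne : p ≠ y := by rintro rfl; exact hyU hxU
    obtain ⟨f, hfS, hfne⟩ := hsep p hpr y hyr hne
    rcases lt_or_gt_of_ne hfne with h | h
    · obtain ⟨m, hm1, hm2⟩ := exists_rat_btwn h
      obtain ⟨a, ha⟩ := exists_rat_lt (f p)
      exact ⟨f, a, m, hfS, ⟨ha, hm1⟩, fun hc => absurd hc.2 (not_le.mpr hm2)⟩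
    · obtain ⟨m, hm1, hm2⟩ := exists_rat_btwn h
      obtain ⟨b, hb⟩ := exists_rat_gt (f p)
      exact ⟨f, m, b, hfS, ⟨hm2, hb⟩, fun hc => absurd hc.1 (not_le.mpr hm1)⟩
  choose F A B hFS hFp hFy using hKey
  -- K is compact
  have hKcomp : IsCompact K := by
    have : CompactSpace (Set.range r) := isCompact_iff_compactSpace.mp hcomp
    have hclosed : IsClosed ((Subtype.val ⁻¹' U : Set (Set.range r))ᶜ) := hUopen.isClosed_compl
    have himg := hclosed.isCompact.image continuous_subtype_val
    have heq : Subtype.val '' ((Subtype.val ⁻¹' U : Set (Set.range r))ᶜ) = K := by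
      ext z
      simp only [Set.mem_image, Set.mem_compl_iff, Set.mem_preimage, hK, Set.mem_diff]
      constructor
      · rintro ⟨⟨w, hw⟩, hwU, rfl⟩; exact ⟨hw, hwU⟩
      · rintro ⟨hzr, hzU⟩; exact ⟨⟨z, hzr⟩, hzU, rfl⟩
    rwa [heq] at himg
  -- open cover of K
  set W : K → Set X := fun y => ((F y) ⁻¹' Set.Icc (A y : ℝ) (B y : ℝ))ᶜ with hW
  have hWopen : ∀ y : K, IsOpen (W y) :=
    fun y => (isClosed_Icc.preimage (F y).continuous).isOpen_compl
  have hcover : K ⊆ ⋃ y : K, W y := fun z hz =>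
    Set.mem_iUnion.mpr ⟨⟨z, hz⟩, hFy ⟨z, hz⟩⟩
  obtain ⟨t, ht⟩ := hKcomp.elim_finite_subcover W hWopen hcover
  set k := t.card with hk
  set e : Fin k ≃ t := t.equivFin.symm with he
  refine ⟨⋂ i : Fin k, (F (e i : K)) ⁻¹' Set.Ioo (A (e i : K) : ℝ) (B (e i : K) : ℝ),
    ⟨k, fun i => F (e i : K), fun i => A (e i : K), fun i => B (e i : K),
      fun i => hFS _, rfl⟩, ?_, ?_⟩
  · refine Set.mem_iInter.mpr fun i => ?_
    have hx : F (e i : K) x = F (e i : K) p :=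
      (congrFun (hfix _ (hFS (e i : K))) x).symm
    simpa [Set.mem_preimage, hx] using hFp (e i : K)
  · rintro _ ⟨z, hz, rfl⟩
    by_contra hrz
    have hzK : r z ∈ K := ⟨⟨z, rfl⟩, hrz⟩
    obtain ⟨y, hyt, hyW⟩ := Set.mem_iUnion₂.mp (ht hzK)
    set i := t.equivFin ⟨y, hyt⟩ with hi
    have hei : (e i : K) = y := by simp [he, hi]
    have hzmem : F y z ∈ Set.Ioo (A y : ℝ) (B y : ℝ) := by
      have := Set.mem_iInter.mp hz i
      rwa [hei] at this
    have hfz : F y (r z) = F y z := congrFun (hfix _ (hFS y)) z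
    exact hyW (by rw [Set.mem_preimage, hfz]; exact ⟨hzmem.1.le, hzmem.2.le⟩)
end

section
/- Let X be a countably compact Hausdorff space, A ⊆ C(X, ℝ) a countable set of continuous functions, K ⊆ X a closed subset on which A separates points, and suppose the evaluation map Φ : X → ℝ^A, Φ(x)(f) = f(x), satisfies Φ[X] = Φ[K]. Then r = (Φ|_K)⁻¹ ∘ Φ is a well-defined continuous retraction of X onto K satisfying f ∘ r = f for every f ∈ A. -/
open Filter Topology

/-- A space is countably compact (sequential cluster-point version): every
sequence has a cluster point. -/
def IsCountablyCompactSpace (X : Type*) [TopologicalSpace X] : Prop :=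
  ∀ u : ℕ → X, ∃ a : X, MapClusterPt a Filter.atTop u

theorem retraction_from_evaluation_map
    {X : Type*} [TopologicalSpace X] [T2Space X]
    (hX : IsCountablyCompactSpace X)
    (A : Set C(X, ℝ)) (hA : A.Countable)
    (K : Set X) (hK : IsClosed K)
    (hsep : ∀ x ∈ K, ∀ y ∈ K, x ≠ y → ∃ f ∈ A, f x ≠ f y)
    (Φ : X → (A → ℝ)) (hΦ : ∀ (x : X) (f : A), Φ x f = (f : C(X, ℝ)) x)
    (himg : Φ '' Set.univ = Φ '' K) :
    ∃ r : X → X, Continuous r ∧ (∀ x, r x ∈ K) ∧ (∀ x ∈ K, r x = x) ∧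
      r ∘ r = r ∧ Set.range r = K ∧
      (∀ f ∈ A, ((f : C(X, ℝ)) : X → ℝ) ∘ r = f) ∧
      (∀ x, Φ (r x) = Φ x) ∧
      (∀ r' : X → X, (∀ x, r' x ∈ K) → (∀ x, Φ (r' x) = Φ x) → r' = r) := by
  haveI : Countable ↥A := hA.to_subtype
  letI : MetricSpace (A → ℝ) := TopologicalSpace.metrizableSpaceMetric (A → ℝ)
  -- continuity of Φ
  have hΦc : Continuous Φ := by
    apply continuous_pi
    intro f
    have : (fun x => Φ x f) = fun x => (f : C(X, ℝ)) x := funext fun x => hΦ x f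
    rw [this]; exact (f : C(X, ℝ)).continuous
  -- injectivity on K
  have hinj : Set.InjOn Φ K := by
    intro x hx y hy hxy
    by_contra hne
    obtain ⟨f, hf, hfne⟩ := hsep x hx y hy hne
    apply hfne
    have := congrFun hxy (⟨f, hf⟩ : A)
    rwa [hΦ, hΦ] at this
  -- images of closed sets are compact
  have hcomp : ∀ C : Set X, IsClosed C → IsCompact (Φ '' C) := by
    intro C hC
    apply IsSeqCompact.isCompact
    intro v hv
    choose u hu huv using hv
    obtain ⟨a, ha⟩ := hX u
    have haC : a ∈ C := by
      have hle : ClusterPt a (Filter.map u atTop ⊓ 𝓟 C) := by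
        have : Filter.map u atTop ≤ Filter.map u atTop ⊓ 𝓟 C :=
          le_inf le_rfl (Filter.le_principal_iff.2 (Filter.mem_map.2
            (Filter.Eventually.of_forall hu)))
        exact ha.clusterPt.mono this
      have := hle.mono inf_le_right
      exact hC.closure_eq ▸ mem_closure_iff_clusterPt.2 this
    have hΦa : MapClusterPt (Φ a) atTop (Φ ∘ u) := ha.continuousAt_comp hΦc.continuousAt
    have hΦa' : MapClusterPt (Φ a) atTop v := by
      have : Φ ∘ u = v := funext huv
      rwa [this] at hΦa
    obtain ⟨ψ, hψ, hten⟩ := TopologicalSpace.FirstCountableTopology.tendsto_subseq hΦa'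
    exact ⟨Φ a, ⟨a, haC, rfl⟩, ψ, hψ, hten⟩
  -- Φ restricted to K is a closed embedding
  set e : K → (A → ℝ) := fun k => Φ k with he_def
  have heinj : Function.Injective e := fun x y h => Subtype.ext (hinj x.2 y.2 h)
  have hecont : Continuous e := hΦc.comp continuous_subtype_val
  have heclosed : IsClosedMap e := by
    intro C hC
    have hCX : IsClosed ((↑) '' C : Set X) :=
      hK.isClosedEmbedding_subtypeVal.isClosedMap _ hC
    have : e '' C = Φ '' ((↑) '' C) := by
      rw [Set.image_image]
    rw [this]
    exact (hcomp _ hCX).isClosed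
  have hemb : IsClosedEmbedding e :=
    Topology.IsClosedEmbedding.of_continuous_injective_isClosedMap hecont heinj heclosed
  -- define r
  have hmem : ∀ x : X, ∃ k, k ∈ K ∧ Φ k = Φ x := by
    intro x
    have : Φ x ∈ Φ '' K := himg ▸ ⟨x, Set.mem_univ x, rfl⟩
    obtain ⟨k, hk, hke⟩ := this
    exact ⟨k, hk, hke⟩
  choose r hrK hrΦ using hmem
  refine ⟨r, ?_, hrK, ?_, ?_, ?_, ?_, hrΦ, ?_⟩
  · -- continuity
    have : Continuous (fun x => (⟨r x, hrK x⟩ : K)) := by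
      rw [hemb.isEmbedding.continuous_iff]
      have : e ∘ (fun x => (⟨r x, hrK x⟩ : K)) = Φ := funext fun x => hrΦ x
      rw [this]; exact hΦc
    exact continuous_subtype_val.comp this
  · intro x hx
    exact hinj (hrK x) hx (hrΦ x)
  · funext x
    exact hinj (hrK (r x)) (hrK x) (hrΦ (r x))
  · apply Set.Subset.antisymm
    · rintro _ ⟨x, rfl⟩; exact hrK x
    · intro k hk; exact ⟨k, hinj (hrK k) hk (hrΦ k)⟩
  · intro f hf
    funext x
    have := congrFun (hrΦ x) (⟨f, hf⟩ : A)
    rwa [hΦ, hΦ] at this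
  · intro r' hr'K hr'Φ
    funext x
    exact hinj (hr'K x) (hrK x) ((hr'Φ x).trans (hrΦ x).symm)
end

section
/- Let K be a compact Hausdorff space and D ⊆ K a set induced by a retractional skeleton {r_s}_{s∈Γ} in K, i.e., D = ⋃_{s∈Γ} r_s[K]. Then D is countably closed in K: for every countable A ⊆ D, the closure of A in K is contained in D. -/
/-- A retractional skeleton in a topological space `K`, indexed by an up-directed
partial order `Γ`. -/
structure RetractionalSkeleton (K : Type*) [TopologicalSpace K]
    (Γ : Type*) [PartialOrder Γ] [IsDirected Γ (· ≤ ·)] [Nonempty Γ] where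
  r : Γ → K → K
  continuous_r : ∀ s, Continuous (r s)
  retraction : ∀ s, r s ∘ r s = r s
  compact_range : ∀ s, IsCompact (Set.range (r s))
  metrizable_range : ∀ s, TopologicalSpace.MetrizableSpace (Set.range (r s))
  comm₁ : ∀ s t, s ≤ t → r s ∘ r t = r s
  comm₂ : ∀ s t, s ≤ t → r t ∘ r s = r s
  sup_seq : ∀ u : ℕ → Γ, StrictMono u →
    ∃ t : Γ, IsLUB (Set.range u) t ∧
      ∀ x, Filter.Tendsto (fun n => r (u n) x) Filter.atTop (nhds (r t x))
  tendsto : ∀ x, Filter.Tendsto (fun s => r s x) Filter.atTop (nhds x)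

theorem induced_set_countably_closed
    {K : Type*} [TopologicalSpace K] [CompactSpace K] [T2Space K]
    {Γ : Type*} [PartialOrder Γ] [IsDirected Γ (· ≤ ·)] [Nonempty Γ]
    (sk : RetractionalSkeleton K Γ)
    (D : Set K) (hD : D = ⋃ s, Set.range (sk.r s)) :
    ∀ A ⊆ D, A.Countable → closure A ⊆ D := by
  classical
  -- First: any countable family of indices in Γ has an upper bound.
  have key : ∀ f : ℕ → Γ, ∃ t : Γ, ∀ n, f n ≤ t := by
    intro f
    -- build a monotone sequence dominating f
    have hstep : ∀ a b : Γ, ∃ c, a ≤ c ∧ b ≤ c := fun a b => directed_of (· ≤ ·) a b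
    let t : ℕ → Γ := fun n => Nat.rec (f 0)
      (fun n tn => (hstep tn (f (n + 1))).choose) n
    have ht_succ : ∀ n, t n ≤ t (n + 1) ∧ f (n + 1) ≤ t (n + 1) := by
      intro n
      exact (hstep (t n) (f (n + 1))).choose_spec
    have ht_mono : Monotone t :=
      monotone_nat_of_le_succ fun n => (ht_succ n).1
    have ht_ge : ∀ n, f n ≤ t n := by
      intro n
      cases n with
      | zero => exact le_refl _
      | succ n => exact (ht_succ n).2
    rcases Classical.em (∃ N, ∀ n, N ≤ n → t n = t N) with h | h
    · obtain ⟨N, hN⟩ := h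
      refine ⟨t N, fun n => (ht_ge n).trans ?_⟩
      calc t n ≤ t (max n N) := ht_mono (le_max_left _ _)
        _ = t N := hN _ (le_max_right _ _)
    · push_neg at h
      -- build a strictly increasing subsequence
      have h' : ∀ N, ∃ n, N < n ∧ t N < t n := by
        intro N
        obtain ⟨n, hn, hne⟩ := h N
        exact ⟨n, lt_of_le_of_ne hn (fun e => hne (e ▸ rfl)), lt_of_le_of_ne (ht_mono hn) (Ne.symm hne)⟩
      let ψ : ℕ → ℕ := fun k => Nat.rec 0 (fun _ pk => (h' pk).choose) k
      have hψ_succ : ∀ k, ψ k < ψ (k + 1) ∧ t (ψ k) < t (ψ (k + 1)) := fun k =>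
        (h' (ψ k)).choose_spec
      have hψ_ge : ∀ k, k ≤ ψ k := by
        intro k
        induction k with
        | zero => exact Nat.zero_le _
        | succ k ih => exact Nat.succ_le_of_lt (lt_of_le_of_lt ih (hψ_succ k).1)
      have hu : StrictMono (fun k => t (ψ k)) :=
        strictMono_nat_of_lt_succ fun k => (hψ_succ k).2
      obtain ⟨v, hv, -⟩ := sk.sup_seq _ hu
      refine ⟨v, fun n => ?_⟩
      calc f n ≤ t n := ht_ge n
        _ ≤ t (ψ n) := ht_mono (hψ_ge n)
        _ ≤ v := hv.1 ⟨n, rfl⟩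
  intro A hAD hAc
  rcases A.eq_empty_or_nonempty with rfl | hAne
  · simp
  obtain ⟨f, hf⟩ := hAc.exists_eq_range hAne
  have hmem : ∀ n, ∃ s, f n ∈ Set.range (sk.r s) := by
    intro n
    have : f n ∈ D := hAD (hf ▸ ⟨n, rfl⟩)
    rw [hD] at this
    simpa using this
  choose s hs using hmem
  obtain ⟨t, ht⟩ := key s
  have hsub : A ⊆ Set.range (sk.r t) := by
    rw [hf]
    rintro _ ⟨n, rfl⟩
    obtain ⟨x, hx⟩ := hs n
    refine ⟨f n, ?_⟩
    calc sk.r t (f n) = sk.r t (sk.r (s n) x) := by rw [hx]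
      _ = (sk.r t ∘ sk.r (s n)) x := rfl
      _ = sk.r (s n) x := by rw [sk.comm₂ (s n) t (ht n)]
      _ = f n := hx
  have hclosed : IsClosed (Set.range (sk.r t)) := (sk.compact_range t).isClosed
  calc closure A ⊆ Set.range (sk.r t) := hclosed.closure_subset_iff.mpr hsub
    _ ⊆ D := hD ▸ Set.subset_iUnion (fun s => Set.range (sk.r s)) t
end

section
/- Let K be a countably compact Hausdorff space and D the set induced by a retractional skeleton in K. Then D is sequentially compact: every sequence in D has a subsequence converging to a point of D. -/
lemma exists_countable_upper {Γ : Type*} [PartialOrder Γ] [IsDirected Γ (· ≤ ·)]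
    (hsup : ∀ u : ℕ → Γ, StrictMono u → ∃ t : Γ, IsLUB (Set.range u) t)
    (s : ℕ → Γ) : ∃ T : Γ, ∀ n, s n ≤ T := by
  choose f hf1 hf2 using fun a b : Γ => directed_of (· ≤ ·) a b
  set t : ℕ → Γ := fun n => Nat.rec (s 0) (fun n tn => f tn (s (n + 1))) n with ht
  have hstep : ∀ n, t n ≤ t (n + 1) := fun n => hf1 _ _
  have hmono : Monotone t := monotone_nat_of_le_succ hstep
  have hts : ∀ n, s n ≤ t n := by
    rintro (_ | n)
    · exact le_refl _
    · exact hf2 _ _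
  by_cases h : ∃ N, ∀ n ≥ N, ¬ t n < t (n + 1)
  · obtain ⟨N, hN⟩ := h
    have hconst : ∀ m, t (N + m) = t N := by
      intro m
      induction m with
      | zero => rfl
      | succ m ih =>
        have := (hstep (N + m)).lt_or_eq.resolve_left (hN _ (Nat.le_add_right N m))
        rw [← ih]; exact this.symm
    refine ⟨t N, fun n => ?_⟩
    calc s n ≤ t n := hts n
      _ ≤ t (N + n) := hmono (Nat.le_add_left n N)
      _ = t N := hconst n
  · push_neg at h
    have hfreq : ∃ᶠ n in Filter.atTop, t n < t (n + 1) := Filter.frequently_atTop.mpr h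
    obtain ⟨φ, hφ, hφ2⟩ := Filter.extraction_of_frequently_atTop hfreq
    have hsm : StrictMono (t ∘ φ) := fun a b hab =>
      lt_of_lt_of_le (hφ2 a) (hmono (Nat.succ_le_of_lt (hφ hab)))
    obtain ⟨T, hT⟩ := hsup _ hsm
    refine ⟨T, fun n => ?_⟩
    calc s n ≤ t n := hts n
      _ ≤ t (φ n) := hmono (hφ.le_apply)
      _ ≤ T := hT.1 ⟨n, rfl⟩


theorem induced_set_sequentially_compact
    {K : Type*} [TopologicalSpace K] [T2Space K]
    (hK : IsCountablyCompactSpace K)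
    {Γ : Type*} [PartialOrder Γ] [IsDirected Γ (· ≤ ·)] [Nonempty Γ]
    (sk : RetractionalSkeleton K Γ)
    (D : Set K) (hD : D = ⋃ s, Set.range (sk.r s)) :
    ∀ u : ℕ → K, (∀ n, u n ∈ D) →
      ∃ a ∈ D, ∃ φ : ℕ → ℕ, StrictMono φ ∧
        Filter.Tendsto (u ∘ φ) Filter.atTop (nhds a) := by
  intro u hu
  have hu' : ∀ n, u n ∈ ⋃ s, Set.range (sk.r s) := fun n => hD ▸ hu n
  choose s hs using fun n => Set.mem_iUnion.mp (hu' n)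
  obtain ⟨T, hT⟩ := exists_countable_upper
    (fun v hv => (sk.sup_seq v hv).imp (fun t ht => ht.1)) s
  have hmem : ∀ n, u n ∈ Set.range (sk.r T) := by
    intro n
    obtain ⟨x, hx⟩ := hs n
    refine ⟨u n, ?_⟩
    rw [← hx]
    exact congrFun (sk.comm₂ (s n) T (hT n)) x
  set S := Set.range (sk.r T)
  haveI : CompactSpace S := isCompact_iff_compactSpace.mp (sk.compact_range T)
  haveI := sk.metrizable_range T
  letI : MetricSpace S := TopologicalSpace.metrizableSpaceMetric S
  set v : ℕ → S := fun n => ⟨u n, hmem n⟩ with hv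
  obtain ⟨a, -, φ, hφ, hconv⟩ := isCompact_univ.tendsto_subseq (fun n => Set.mem_univ (v n))
  refine ⟨(a : K), ?_, φ, hφ, ?_⟩
  · rw [hD]; exact Set.mem_iUnion.mpr ⟨T, a.2⟩
  · have : u ∘ φ = Subtype.val ∘ (v ∘ φ) := rfl
    rw [this]
    exact (continuous_subtype_val.tendsto a).comp hconv
end

section
/- If X is monotonically Sokolov then C_p(X) (the space of continuous real-valued functions on X with the pointwise convergence topology) is monotonically retractable, and if X is monotonically retractable then C_p(X) is monotonically Sokolov; consequently, if X is monotonically retractable then X has countable tightness. -/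
/-!
Both dualities go through the retraction `g ↦ g ∘ ρ` of `Cₚ(X)` induced by a retraction `ρ`
of `X`, with the network of `Cₚ(X)` made of the finite intersections of the sets
`{g | g(M) ⊆ (p, q)}`, for `M` in the network attached to `ρ` and rational `p, q`.

If `X` is monotonically Sokolov, `ρ` is chosen to preserve the rational level sets of the
functions in the countable set `A ⊆ Cₚ(X)`, so that `g ↦ g ∘ ρ` fixes `A`.

If `X` is monotonically retractable, `ρ` is a retraction onto a countable `A ⊆ X` closed under
adding a finite witness whenever some closed `F₀` of the given family misses the trace of a box
coded from the network of `A` on a finite set. As `g` and `g ∘ ρ` agree on `A`, such a witness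
inside `A` cannot exist when `g ∈ F₀`, so every neighbourhood of `g ∘ ρ` meets `F₀`.

Countable tightness follows from the same kind of closing off: a countable `B ∋ a` that contains a
point of `A` in each network element of `r B` meeting `A` puts `a = r B a` in the closure of
`A ∩ B`.
-/

/-- An assignment of families of sets to sets is ω-monotone: countable values on
countable arguments, monotone, and commuting with countable increasing unions. -/
def OmegaMonotone {X Y : Type*} (N : Set X → Set Y) : Prop :=
  (∀ A : Set X, A.Countable → (N A).Countable) ∧
  (∀ A B : Set X, A.Countable → B.Countable → A ⊆ B → N A ⊆ N B) ∧
  (∀ u : ℕ → Set X, (∀ n, (u n).Countable) → (∀ n, u n ⊆ u (n + 1)) →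
    N (⋃ n, u n) = ⋃ n, N (u n))

/-- A space is monotonically retractable if to every countable set `A` one can
assign a continuous retraction `r A` with `A ⊆ r A [X]` and an ω-monotone
assignment of countable networks of `r A`. -/
def MonotonicallyRetractable (X : Type*) [TopologicalSpace X] : Prop :=
  ∃ (r : Set X → X → X) (N : Set X → Set (Set X)),
    OmegaMonotone N ∧
    ∀ A : Set X, A.Countable →
      Continuous (r A) ∧ r A ∘ r A = r A ∧ A ⊆ Set.range (r A) ∧
      (∀ U : Set X, IsOpen U → ∃ M ⊆ N A, (r A) ⁻¹' U = ⋃₀ M)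

/-- A space is monotonically Sokolov if to every countable family `F` of closed
sets one can assign a continuous retraction `r F` with `r F '' A ⊆ A` for
`A ∈ F` and an ω-monotone assignment of countable external networks of
`r F [X]` in `X`. -/
def MonotonicallySokolov (X : Type*) [TopologicalSpace X] : Prop :=
  ∃ (r : Set (Set X) → X → X) (N : Set (Set X) → Set (Set X)),
    OmegaMonotone N ∧
    ∀ F : Set (Set X), F.Countable → (∀ A ∈ F, IsClosed A) →
      Continuous (r F) ∧ r F ∘ r F = r F ∧
      (∀ A ∈ F, r F '' A ⊆ A) ∧
      (∀ x ∈ Set.range (r F), ∀ U : Set X, IsOpen U → x ∈ U →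
        ∃ M ∈ N F, x ∈ M ∧ M ⊆ U)

open Set Function

section OmegaMonotone

variable {X Y Z : Type*}

theorem OmegaMonotone.monotone_seq {N : Set X → Set Y} (hN : OmegaMonotone N)
    {u : ℕ → Set X} (hu : ∀ n, (u n).Countable) (hmono : ∀ n, u n ⊆ u (n + 1)) :
    Monotone fun n => N (u n) :=
  monotone_nat_of_le_succ fun n => hN.2.1 _ _ (hu n) (hu (n + 1)) (hmono n)

theorem OmegaMonotone.comp {N : Set Y → Set Z} {Φ : Set X → Set Y} (hN : OmegaMonotone N)
    (hΦ : OmegaMonotone Φ) : OmegaMonotone fun A => N (Φ A) := by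
  refine ⟨fun A hA => hN.1 _ (hΦ.1 A hA),
    fun A B hA hB hAB => hN.2.1 _ _ (hΦ.1 A hA) (hΦ.1 B hB) (hΦ.2.1 A B hA hB hAB),
    fun u hu hmono => ?_⟩
  dsimp only
  rw [hΦ.2.2 u hu hmono]
  exact hN.2.2 _ (fun n => hΦ.1 _ (hu n)) fun n => hΦ.2.1 _ _ (hu n) (hu (n + 1)) (hmono n)

theorem omegaMonotone_id : OmegaMonotone fun A : Set X => A :=
  ⟨fun _ hA => hA, fun _ _ _ _ hAB => hAB, fun _ _ _ => rfl⟩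

theorem omegaMonotone_const {c : Set Y} (hc : c.Countable) : OmegaMonotone fun _ : Set X => c :=
  ⟨fun _ _ => hc, fun _ _ _ _ _ => Subset.rfl, fun _ _ _ => iUnion_const c |>.symm⟩

theorem OmegaMonotone.union {N₁ N₂ : Set X → Set Y} (h₁ : OmegaMonotone N₁)
    (h₂ : OmegaMonotone N₂) : OmegaMonotone fun A => N₁ A ∪ N₂ A := by
  refine ⟨fun A hA => (h₁.1 A hA).union (h₂.1 A hA),
    fun A B hA hB hAB => union_subset_union (h₁.2.1 A B hA hB hAB) (h₂.2.1 A B hA hB hAB),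
    fun u hu hmono => ?_⟩
  dsimp only
  rw [h₁.2.2 u hu hmono, h₂.2.2 u hu hmono, iUnion_union_distrib]

theorem OmegaMonotone.prod {N₁ : Set X → Set Y} {N₂ : Set X → Set Z} (h₁ : OmegaMonotone N₁)
    (h₂ : OmegaMonotone N₂) : OmegaMonotone fun A => N₁ A ×ˢ N₂ A := by
  refine ⟨fun A hA => (h₁.1 A hA).prod (h₂.1 A hA),
    fun A B hA hB hAB => prod_mono (h₁.2.1 A B hA hB hAB) (h₂.2.1 A B hA hB hAB),
    fun u hu hmono => ?_⟩
  dsimp only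
  rw [h₁.2.2 u hu hmono, h₂.2.2 u hu hmono,
    iUnion_prod_of_monotone (h₁.monotone_seq hu hmono) (h₂.monotone_seq hu hmono)]

theorem OmegaMonotone.image {N : Set X → Set Y} (hN : OmegaMonotone N) (f : Y → Z) :
    OmegaMonotone fun A => f '' N A := by
  refine ⟨fun A hA => (hN.1 A hA).image f, fun A B hA hB hAB => image_mono (hN.2.1 A B hA hB hAB),
    fun u hu hmono => ?_⟩
  dsimp only
  rw [hN.2.2 u hu hmono, image_iUnion]

theorem OmegaMonotone.iUnion {N : ℕ → Set X → Set Y} (hN : ∀ n, OmegaMonotone (N n)) :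
    OmegaMonotone fun A => ⋃ n, N n A := by
  refine ⟨fun A hA => countable_iUnion fun n => (hN n).1 A hA,
    fun A B hA hB hAB => iUnion_mono fun n => (hN n).2.1 A B hA hB hAB, fun u hu hmono => ?_⟩
  simp only [(hN _).2.2 u hu hmono]
  exact iUnion_comm _

theorem omegaMonotone_biUnion {φ : X → Set Y} (hφ : ∀ x, (φ x).Countable) :
    OmegaMonotone fun A => ⋃ x ∈ A, φ x :=
  ⟨fun _ hA => hA.biUnion fun x _ => hφ x, fun _ _ _ _ hAB => biUnion_subset_biUnion_left hAB,
    fun _ _ _ => biUnion_iUnion _ _⟩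

theorem omegaMonotone_finite_subsets : OmegaMonotone fun A : Set X => {t | t.Finite ∧ t ⊆ A} := by
  refine ⟨fun A hA => countable_ofPred_finite_subset hA,
    fun A B _ _ hAB t ht => ⟨ht.1, ht.2.trans hAB⟩, fun u _ hmono => Subset.antisymm ?_ fun t ht => ?_⟩
  · rintro t ⟨ht, htu⟩
    obtain ⟨n, hn⟩ := (monotone_nat_of_le_succ hmono).directed_le
      |>.exists_mem_subset_of_finset_subset_biUnion (s := ht.toFinset) (by simpa using htu)
    exact mem_iUnion.2 ⟨n, ht, by simpa using hn⟩
  · obtain ⟨n, ht, htu⟩ := mem_iUnion.1 ht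
    exact ⟨ht, htu.trans (subset_iUnion u n)⟩

end OmegaMonotone

namespace MonotoneRetractability

section

variable {X : Type*}

theorem apply_eq_self_of_mem_range {ρ : X → X} (h : ρ ∘ ρ = ρ) {x : X} (hx : x ∈ range ρ) :
    ρ x = x := by
  obtain ⟨y, rfl⟩ := hx
  exact congrFun h y

def boxCodes (𝒩 : Set (Set X)) : Set (Set (Set X × ℚ × ℚ)) :=
  {t | t.Finite ∧ t ⊆ 𝒩 ×ˢ univ}

theorem omegaMonotone_boxCodes : OmegaMonotone (boxCodes (X := X)) :=
  omegaMonotone_finite_subsets.comp (omegaMonotone_id.prod (omegaMonotone_const countable_univ))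

def levelSets (f : X → ℝ) : Set (Set X) :=
  range (fun p : ℚ => f ⁻¹' Iic (p : ℝ)) ∪ range (fun p : ℚ => f ⁻¹' Ici (p : ℝ))

theorem comp_eq_self_of_image_levelSets_subset {f : X → ℝ} {ρ : X → X}
    (h : ∀ S ∈ levelSets f, ρ '' S ⊆ S) : f ∘ ρ = f := by
  funext x
  by_contra hne
  rcases lt_or_gt_of_ne hne with hlt | hgt
  · obtain ⟨p, hp, hpx⟩ := exists_rat_btwn hlt
    have : (p : ℝ) ≤ f (ρ x) := h _ (Or.inr ⟨p, rfl⟩) (mem_image_of_mem ρ (hpx.le : (p : ℝ) ≤ f x))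
    exact hp.not_ge this
  · obtain ⟨p, hxp, hp⟩ := exists_rat_btwn hgt
    have : f (ρ x) ≤ p := h _ (Or.inl ⟨p, rfl⟩) (mem_image_of_mem ρ (hxp.le : f x ≤ p))
    exact hp.not_ge this

def pickStage (N : Set X → Set (Set X)) (pick : Set X → X) (a : X) : ℕ → Set X
  | 0 => {a}
  | n + 1 => pickStage N pick a n ∪ pick '' N (pickStage N pick a n)

end

variable {X : Type*} [TopologicalSpace X]

abbrev Cp (X : Type*) [TopologicalSpace X] : Type _ := {f : X → ℝ // Continuous f}

theorem exists_rat_Ioo_subset {V : Set ℝ} (hV : IsOpen V) {y : ℝ} (hy : y ∈ V) :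
    ∃ p q : ℚ, y ∈ Ioo (p : ℝ) q ∧ Ioo (p : ℝ) q ⊆ V := by
  obtain ⟨_, hmem, hy, hsub⟩ := Real.isTopologicalBasis_Ioo_rat.exists_subset_of_mem_open hy hV
  simp only [mem_iUnion, mem_singleton_iff] at hmem
  obtain ⟨p, q, -, rfl⟩ := hmem
  exact ⟨p, q, hy, hsub⟩

theorem exists_finset_rat_nhds {U : Set (Cp X)} (hU : IsOpen U) {h : Cp X} (hh : h ∈ U) :
    ∃ (s : Finset X) (P Q : X → ℚ), (∀ x ∈ s, h.1 x ∈ Ioo (P x : ℝ) (Q x)) ∧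
      ∀ k : Cp X, (∀ x ∈ s, k.1 x ∈ Ioo (P x : ℝ) (Q x)) → k ∈ U := by
  obtain ⟨V, hV, rfl⟩ := isOpen_induced_iff.1 hU
  obtain ⟨I, u, hu, hIV⟩ := isOpen_pi_iff.1 hV h.1 hh
  choose! P Q hPQ using fun x (hx : x ∈ I) => exists_rat_Ioo_subset (hu x hx).1 (hu x hx).2
  exact ⟨I, P, Q, fun x hx => (hPQ x hx).1, fun k hk => hIV fun x hx => (hPQ x hx).2 (hk x hx)⟩

open Classical in
noncomputable def precomp (ρ : X → X) (g : Cp X) : Cp X :=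
  if hρ : Continuous ρ then ⟨g.1 ∘ ρ, g.2.comp hρ⟩ else g

section Precomp

variable {ρ : X → X} (hρ : Continuous ρ)
include hρ

theorem precomp_val (g : Cp X) : (precomp ρ g).1 = g.1 ∘ ρ := by
  simp [precomp, hρ]

theorem continuous_precomp : Continuous (precomp ρ : Cp X → Cp X) := by
  have hval : Subtype.val ∘ precomp ρ = fun g : Cp X => g.1 ∘ ρ := funext (precomp_val hρ)
  refine continuous_induced_rng.2 ?_
  rw [hval]
  exact continuous_pi fun x => (continuous_apply (ρ x)).comp continuous_subtype_val

theorem precomp_idem (h : ρ ∘ ρ = ρ) : precomp ρ ∘ precomp ρ = (precomp ρ : Cp X → Cp X) := by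
  funext g
  apply Subtype.ext
  simp only [comp_apply, precomp_val hρ, comp_assoc, h]

end Precomp

/-- A code `t` stands for the box `⋂ (M, p, q) ∈ t, {f | f '' M ⊆ (p, q)}`; `boxOn C t` only tests
the points of `C`. -/
def boxOn (C : Set X) (t : Set (Set X × ℚ × ℚ)) : Set (Cp X) :=
  {f | ∀ e ∈ t, MapsTo f.1 (C ∩ e.1) (Ioo (e.2.1 : ℝ) e.2.2)}

def boxNet (𝒩 : Set (Set X)) : Set (Set (Cp X)) :=
  boxOn univ '' boxCodes 𝒩

theorem boxOn_anti {C D : Set X} (h : C ⊆ D) (t : Set (Set X × ℚ × ℚ)) :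
    boxOn D t ⊆ boxOn C t :=
  fun _ hf e he => (hf e he).mono_left (inter_subset_inter_left _ h)

theorem omegaMonotone_boxNet : OmegaMonotone (boxNet (X := X)) :=
  omegaMonotone_boxCodes.image _

theorem exists_boxCode (φ : X → X) {𝒩 : Set (Set X)} {g : Cp X} {s : Finset X} {P Q : X → ℚ}
    (hg : ∀ x ∈ s, ∃ M ∈ 𝒩, φ x ∈ M ∧ MapsTo g.1 M (Ioo (P x : ℝ) (Q x))) :
    ∃ t ∈ boxCodes 𝒩, g ∈ boxOn univ t ∧
      ∀ k ∈ boxOn (φ '' s) t, ∀ x ∈ s, k.1 (φ x) ∈ Ioo (P x : ℝ) (Q x) := by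
  choose! M hM𝒩 hφM hgM using hg
  refine ⟨(fun x => (M x, P x, Q x)) '' s, ⟨s.finite_toSet.image _, ?_⟩, ?_, ?_⟩
  · rintro _ ⟨x, hx, rfl⟩
    exact ⟨hM𝒩 x hx, trivial⟩
  · rintro _ ⟨x, hx, rfl⟩ y ⟨-, hy⟩
    exact hgM x hx hy
  · intro k hk x hx
    exact hk _ ⟨x, hx, rfl⟩ ⟨mem_image_of_mem φ hx, hφM x hx⟩

def levelFamily (A : Set (Cp X)) : Set (Set X) :=
  ⋃ f ∈ A, levelSets f.1

theorem omegaMonotone_levelFamily : OmegaMonotone (levelFamily (X := X)) :=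
  omegaMonotone_biUnion fun _ => (countable_range _).union (countable_range _)

theorem isClosed_of_mem_levelFamily {A : Set (Cp X)} {S : Set X} (hS : S ∈ levelFamily A) :
    IsClosed S := by
  obtain ⟨f, -, (⟨p, rfl⟩ | ⟨p, rfl⟩)⟩ := mem_iUnion₂.1 hS
  · exact isClosed_Iic.preimage f.2
  · exact isClosed_Ici.preimage f.2

theorem exists_mem_boxNet_subset_preimage_precomp {ρ : X → X} (hρ : Continuous ρ)
    {𝒩 : Set (Set X)} (h𝒩 : ∀ x ∈ range ρ, ∀ V, IsOpen V → x ∈ V → ∃ M ∈ 𝒩, x ∈ M ∧ M ⊆ V)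
    {U : Set (Cp X)} (hU : IsOpen U) {g : Cp X} (hg : precomp ρ g ∈ U) :
    ∃ T ∈ boxNet 𝒩, g ∈ T ∧ T ⊆ precomp ρ ⁻¹' U := by
  obtain ⟨s, P, Q, hgs, hsU⟩ := exists_finset_rat_nhds hU hg
  have hcover : ∀ x ∈ s, ∃ M ∈ 𝒩, ρ x ∈ M ∧ MapsTo g.1 M (Ioo (P x : ℝ) (Q x)) := by
    intro x hx
    have hgx : g.1 (ρ x) ∈ Ioo (P x : ℝ) (Q x) := by simpa [precomp_val hρ] using hgs x hx
    exact h𝒩 _ (mem_range_self x) _ (isOpen_Ioo.preimage g.2) hgx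
  obtain ⟨t, ht, hgt, hk⟩ := exists_boxCode ρ hcover
  refine ⟨boxOn univ t, mem_image_of_mem _ ht, hgt, fun k hkt => hsU _ fun x hx => ?_⟩
  rw [precomp_val hρ]
  exact hk k (boxOn_anti (subset_univ _) t hkt) x hx

theorem exists_boxCode_of_network {ρ : X → X} (hρ : Continuous ρ) {𝒩 : Set (Set X)}
    (hnet : ∀ V, IsOpen V → ∃ M ⊆ 𝒩, ρ ⁻¹' V = ⋃₀ M)
    {U : Set (Cp X)} (hU : IsOpen U) {g : Cp X} (hg : precomp ρ g ∈ U) :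
    ∃ t ∈ boxCodes 𝒩, precomp ρ g ∈ boxOn univ t ∧ ∃ s : Set X, s.Finite ∧ boxOn s t ⊆ U := by
  obtain ⟨s, P, Q, hgs, hsU⟩ := exists_finset_rat_nhds hU hg
  have hcover : ∀ x ∈ s, ∃ M ∈ 𝒩, x ∈ M ∧ MapsTo (precomp ρ g).1 M (Ioo (P x : ℝ) (Q x)) := by
    intro x hx
    obtain ⟨M, hM𝒩, hMeq⟩ := hnet _ (isOpen_Ioo.preimage g.2)
    rw [← preimage_comp, ← precomp_val hρ] at hMeq
    obtain ⟨T, hTM, hxT⟩ : x ∈ ⋃₀ M := hMeq ▸ hgs x hx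
    exact ⟨T, hM𝒩 hTM, hxT, (subset_sUnion_of_mem hTM).trans hMeq.ge⟩
  obtain ⟨t, ht, hgt, hk⟩ := exists_boxCode id hcover
  rw [image_id] at hk
  exact ⟨t, ht, hgt, s, s.finite_toSet, fun k hkt => hsU k (hk k hkt)⟩

theorem mem_boxOn_of_precomp_mem {ρ : X → X} (hρ : Continuous ρ) {C : Set X}
    (hfix : ∀ x ∈ C, ρ x = x) {t : Set (Set X × ℚ × ℚ)} {g : Cp X}
    (hg : precomp ρ g ∈ boxOn univ t) : g ∈ boxOn C t := by
  intro e he x ⟨hxC, hxe⟩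
  have := hg e he ⟨trivial, hxe⟩
  rwa [precomp_val hρ, comp_apply, hfix x hxC] at this

theorem precomp_mem_of_separators_subset {ρ : X → X} (hρ : Continuous ρ) {A : Set X}
    (hfix : ∀ x ∈ A, ρ x = x) {𝒩 : Set (Set X)} (hnet : ∀ V, IsOpen V → ∃ M ⊆ 𝒩, ρ ⁻¹' V = ⋃₀ M)
    {F₀ : Set (Cp X)} (hF₀ : IsClosed F₀)
    (hsep : ∀ t ∈ boxCodes 𝒩, ∀ C : Set X, C.Finite → Disjoint F₀ (boxOn C t) →
      ∃ C' ⊆ A, Disjoint F₀ (boxOn C' t))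
    {g : Cp X} (hg : g ∈ F₀) : precomp ρ g ∈ F₀ := by
  rw [← hF₀.closure_eq, mem_closure_iff]
  intro U hU hgU
  obtain ⟨t, ht, hgt, s, hs, hsU⟩ := exists_boxCode_of_network hρ hnet hU hgU
  by_contra hUF₀
  have hdisj : Disjoint F₀ (boxOn s t) :=
    disjoint_left.2 fun f hf hfs => hUF₀ ⟨f, hsU hfs, hf⟩
  obtain ⟨C, hCA, hC⟩ := hsep t ht s hs hdisj
  exact disjoint_left.1 hC hg (mem_boxOn_of_precomp_mem hρ (fun x hx => hfix x (hCA hx)) hgt)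

open Classical in
noncomputable def separator (F₀ : Set (Cp X)) (t : Set (Set X × ℚ × ℚ)) : Set X :=
  if h : ∃ C : Set X, C.Finite ∧ Disjoint F₀ (boxOn C t) then h.choose else ∅

theorem finite_separator (F₀ : Set (Cp X)) (t : Set (Set X × ℚ × ℚ)) :
    (separator F₀ t).Finite := by
  unfold separator
  split_ifs with h
  exacts [h.choose_spec.1, finite_empty]

theorem disjoint_boxOn_separator {F₀ : Set (Cp X)} {t : Set (Set X × ℚ × ℚ)}
    (h : ∃ C : Set X, C.Finite ∧ Disjoint F₀ (boxOn C t)) :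
    Disjoint F₀ (boxOn (separator F₀ t) t) := by
  rw [separator, dif_pos h]
  exact h.choose_spec.2

noncomputable def separatorStage (N : Set X → Set (Set X)) (F : Set (Set (Cp X))) : ℕ → Set X
  | 0 => ∅
  | n + 1 => separatorStage N F n ∪
      ⋃ τ ∈ F ×ˢ boxCodes (N (separatorStage N F n)), separator τ.1 τ.2

noncomputable def separatorHull (N : Set X → Set (Set X)) (F : Set (Set (Cp X))) : Set X :=
  ⋃ n, separatorStage N F n

section SeparatorHull

variable {N : Set X → Set (Set X)} (hN : OmegaMonotone N)
include hN

theorem omegaMonotone_separatorStage (n : ℕ) : OmegaMonotone fun F => separatorStage N F n := by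
  induction n with
  | zero => exact omegaMonotone_const countable_empty
  | succ n ih =>
    exact ih.union <| (omegaMonotone_biUnion fun τ => (finite_separator τ.1 τ.2).countable).comp
      (omegaMonotone_id.prod (omegaMonotone_boxCodes.comp (hN.comp ih)))

theorem omegaMonotone_separatorHull : OmegaMonotone (separatorHull N) :=
  OmegaMonotone.iUnion (omegaMonotone_separatorStage hN)

theorem exists_separator_subset_separatorHull {F : Set (Set (Cp X))} (hF : F.Countable)
    {F₀ : Set (Cp X)} (hF₀ : F₀ ∈ F) {t : Set (Set X × ℚ × ℚ)}
    (ht : t ∈ boxCodes (N (separatorHull N F)))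
    (hsep : ∃ C : Set X, C.Finite ∧ Disjoint F₀ (boxOn C t)) :
    ∃ C ⊆ separatorHull N F, Disjoint F₀ (boxOn C t) := by
  have hunion : boxCodes (N (separatorHull N F)) = ⋃ n, boxCodes (N (separatorStage N F n)) :=
    (omegaMonotone_boxCodes.comp hN).2.2 _
      (fun n => (omegaMonotone_separatorStage hN n).1 F hF) fun n => subset_union_left
  rw [hunion] at ht
  obtain ⟨n, ht⟩ := mem_iUnion.1 ht
  refine ⟨separator F₀ t, ?_, disjoint_boxOn_separator hsep⟩
  exact (subset_biUnion_of_mem (u := fun τ => separator τ.1 τ.2) (mk_mem_prod hF₀ ht)).trans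
    (subset_union_right.trans (subset_iUnion (separatorStage N F) (n + 1)))

end SeparatorHull

end MonotoneRetractability

open MonotoneRetractability

section

variable {X : Type*} [TopologicalSpace X]

theorem MonotonicallySokolov.monotonicallyRetractable_cp (h : MonotonicallySokolov X) :
    MonotonicallyRetractable (Cp X) := by
  obtain ⟨r, N, hN, hr⟩ := h
  refine ⟨fun A => precomp (r (levelFamily A)), fun A => boxNet (N (levelFamily A)),
    omegaMonotone_boxNet.comp (hN.comp omegaMonotone_levelFamily), fun A hA => ?_⟩
  obtain ⟨hcont, hidem, hinv, hext⟩ :=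
    hr _ (omegaMonotone_levelFamily.1 A hA) fun _ => isClosed_of_mem_levelFamily
  refine ⟨continuous_precomp hcont, precomp_idem hcont hidem, fun f hf => ⟨f, ?_⟩, fun U hU => ?_⟩
  · exact Subtype.ext <| (precomp_val hcont f).trans <|
      comp_eq_self_of_image_levelSets_subset fun S hS => hinv S (mem_biUnion hf hS)
  · refine ⟨{T ∈ boxNet (N (levelFamily A)) | T ⊆ precomp _ ⁻¹' U}, sep_subset _ _,
      Subset.antisymm (fun g hg => ?_) (sUnion_subset fun T hT => hT.2)⟩
    obtain ⟨T, hT, hgT, hTU⟩ := exists_mem_boxNet_subset_preimage_precomp hcont hext hU hg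
    exact ⟨T, ⟨hT, hTU⟩, hgT⟩

theorem MonotonicallyRetractable.monotonicallySokolov_cp (h : MonotonicallyRetractable X) :
    MonotonicallySokolov (Cp X) := by
  obtain ⟨r, N, hN, hr⟩ := h
  refine ⟨fun F => precomp (r (separatorHull N F)), fun F => boxNet (N (separatorHull N F)),
    omegaMonotone_boxNet.comp (hN.comp (omegaMonotone_separatorHull hN)), fun F hF hcl => ?_⟩
  obtain ⟨hcont, hidem, hrange, hnet⟩ := hr _ ((omegaMonotone_separatorHull hN).1 F hF)
  refine ⟨continuous_precomp hcont, precomp_idem hcont hidem, ?_, ?_⟩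
  · rintro F₀ hF₀ _ ⟨g, hg, rfl⟩
    exact precomp_mem_of_separators_subset hcont
      (fun x hx => apply_eq_self_of_mem_range hidem (hrange hx)) hnet (hcl F₀ hF₀)
      (fun t ht C hC hsep => exists_separator_subset_separatorHull hN hF hF₀ ht ⟨C, hC, hsep⟩) hg
  · rintro _ ⟨g, rfl⟩ U hU hgU
    obtain ⟨t, ht, hgt, s, -, hsU⟩ := exists_boxCode_of_network hcont hnet hU hgU
    exact ⟨boxOn univ t, mem_image_of_mem _ ht, hgt, (boxOn_anti (subset_univ s) t).trans hsU⟩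

theorem MonotonicallyRetractable.countableTightness (h : MonotonicallyRetractable X) :
    CountableTightness X := by
  classical
  obtain ⟨r, N, ⟨hNc, -, hNu⟩, hr⟩ := h
  intro A a ha
  let pick : Set X → X := fun T => if hT : (T ∩ A).Nonempty then hT.some else a
  have hpick : ∀ T, (T ∩ A).Nonempty → pick T ∈ T ∩ A := fun T hT => by
    simp only [pick, dif_pos hT]
    exact hT.some_mem
  set B := pickStage N pick a
  have hB : ∀ n, (B n).Countable := by
    intro n
    induction n with
    | zero => exact countable_singleton a
    | succ n ih => exact ih.union ((hNc _ ih).image pick)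
  obtain ⟨hcont, hidem, hrange, hnet⟩ := hr _ (countable_iUnion hB)
  set ρ := r (⋃ n, B n)
  have hfix : ∀ x ∈ ⋃ n, B n, ρ x = x := fun x hx => apply_eq_self_of_mem_range hidem (hrange hx)
  refine ⟨A ∩ ⋃ n, B n, inter_subset_left, (countable_iUnion hB).mono inter_subset_right,
    mem_closure_iff.2 fun U hU haU => ?_⟩
  -- `ρ x ∈ U` for some `x ∈ A`; a network element `T ∋ x` inside `ρ ⁻¹' U` was seen at a finite
  -- stage, so `pick T ∈ A ∩ ρ ⁻¹' U` lies in `B` and is fixed by `ρ`.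
  have haρ : a ∈ closure (ρ '' A) :=
    image_closure_subset_closure_image hcont ⟨a, ha, hfix a (mem_iUnion.2 ⟨0, rfl⟩)⟩
  obtain ⟨_, hxU, x, hxA, rfl⟩ := mem_closure_iff.1 haρ U hU haU
  obtain ⟨M, hMN, hMeq⟩ := hnet U hU
  have hx : x ∈ ρ ⁻¹' U := hxU
  rw [hMeq] at hx
  obtain ⟨T, hTM, hxT⟩ := hx
  have hTN : T ∈ ⋃ n, N (B n) := hNu B hB (fun n => subset_union_left) ▸ hMN hTM
  obtain ⟨n, hTn⟩ := mem_iUnion.1 hTN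
  obtain ⟨hpT, hpA⟩ := hpick T ⟨x, hxT, hxA⟩
  have hpB : pick T ∈ ⋃ n, B n := mem_iUnion.2 ⟨n + 1, Or.inr (mem_image_of_mem pick hTn)⟩
  have hpU : pick T ∈ ρ ⁻¹' U := hMeq ▸ mem_sUnion_of_mem hpT hTM
  exact ⟨pick T, hfix _ hpB ▸ hpU, hpA, hpB⟩

end

theorem monotone_retractability_sokolov_duality (X : Type*) [TopologicalSpace X] :
    (MonotonicallySokolov X →
      MonotonicallyRetractable {f : X → ℝ // Continuous f}) ∧
    (MonotonicallyRetractable X →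
      MonotonicallySokolov {f : X → ℝ // Continuous f}) ∧
    (MonotonicallyRetractable X → CountableTightness X) :=
  ⟨MonotonicallySokolov.monotonicallyRetractable_cp,
    MonotonicallyRetractable.monotonicallySokolov_cp, MonotonicallyRetractable.countableTightness⟩
end

section
/- Let X be a normal space, r : X → X a continuous retraction, and N a countable family of subsets of X which is a network of r. If x, y ∈ r[X] with x ≠ y, and r[X] is Hausdorff regular (e.g., compact Hausdorff), then there exist N_x, N_y ∈ N with x ∈ N_x, y ∈ N_y, closure(N_x) ∩ closure(N_y) = ∅, and hence a bounded continuous function f : X → ℝ with f(x) = 0 and f(y) = 1. -/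
open Set

/-- In a T2 regular space, distinct points have open neighborhoods with disjoint closures. -/
lemma sep_closures {Y : Type*} [TopologicalSpace Y] [T2Space Y] [RegularSpace Y]
    (a b : Y) (hab : a ≠ b) : ∃ A B : Set Y, IsOpen A ∧ IsOpen B ∧ a ∈ A ∧ b ∈ B ∧
      Disjoint (closure A) (closure B) := by
  obtain ⟨A', B', hA', hB', haA', hbB', hd⟩ := t2_separation hab
  obtain ⟨CA, ⟨hCAmem, hCAcl⟩, hCA⟩ := (closed_nhds_basis a).mem_iff.mp (hA'.mem_nhds haA')
  obtain ⟨CB, ⟨hCBmem, hCBcl⟩, hCB⟩ := (closed_nhds_basis b).mem_iff.mp (hB'.mem_nhds hbB')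
  refine ⟨interior CA, interior CB, isOpen_interior, isOpen_interior,
    mem_interior_iff_mem_nhds.mpr hCAmem, mem_interior_iff_mem_nhds.mpr hCBmem, ?_⟩
  have h1 : closure (interior CA) ⊆ A' :=
    (closure_minimal interior_subset hCAcl).trans hCA
  have h2 : closure (interior CB) ⊆ B' :=
    (closure_minimal interior_subset hCBcl).trans hCB
  exact hd.mono h1 h2

theorem network_separation_in_normal_space
    {X : Type*} [TopologicalSpace X] [NormalSpace X]
    (r : X → X) (hr : Continuous r) (hretr : r ∘ r = r)
    (N : Set (Set X)) (hNcount : N.Countable)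
    (hnet : ∀ U : Set X, IsOpen U → ∃ M ⊆ N, r ⁻¹' U = ⋃₀ M)
    (hT2 : T2Space (Set.range r)) (hreg : RegularSpace (Set.range r))
    (x y : X) (hx : x ∈ Set.range r) (hy : y ∈ Set.range r) (hxy : x ≠ y) :
    ∃ Nx ∈ N, ∃ Ny ∈ N, x ∈ Nx ∧ y ∈ Ny ∧ closure Nx ∩ closure Ny = ∅ ∧
      ∃ f : X → ℝ, Continuous f ∧ (∃ C : ℝ, ∀ z, |f z| ≤ C) ∧
        f x = 0 ∧ f y = 1 := by
  have hfix : ∀ z ∈ Set.range r, r z = z := by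
    rintro z ⟨w, rfl⟩
    exact congrFun hretr w
  -- the corestriction of r
  set s : X → Set.range r := fun z => ⟨r z, Set.mem_range_self z⟩ with hs
  have hscont : Continuous s := hr.subtype_mk _
  obtain ⟨A, B, hA, hB, haA, hbB, hdAB⟩ :=
    sep_closures (⟨x, hx⟩ : Set.range r) ⟨y, hy⟩ (by simp [hxy])
  -- pull back the closed sets
  have hFcl : IsClosed (s ⁻¹' closure A) := isClosed_closure.preimage hscont
  have hGcl : IsClosed (s ⁻¹' closure B) := isClosed_closure.preimage hscont
  have hFG : Disjoint (s ⁻¹' closure A) (s ⁻¹' closure B) :=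
    Disjoint.preimage s hdAB
  obtain ⟨g, hg0, hg1, hg01⟩ := exists_continuous_zero_one_of_isClosed hFcl hGcl hFG
  have hxF : x ∈ s ⁻¹' closure A := by
    have : s x = ⟨x, hx⟩ := Subtype.ext (hfix x hx)
    simp only [Set.mem_preimage, this]
    exact subset_closure haA
  have hyG : y ∈ s ⁻¹' closure B := by
    have : s y = ⟨y, hy⟩ := Subtype.ext (hfix y hy)
    simp only [Set.mem_preimage, this]
    exact subset_closure hbB
  -- two open sets in X
  obtain ⟨M₁, hM₁N, hM₁⟩ := hnet (g ⁻¹' Set.Iio (1/3 : ℝ)) (isOpen_Iio.preimage g.continuous)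
  obtain ⟨M₂, hM₂N, hM₂⟩ := hnet (g ⁻¹' Set.Ioi (2/3 : ℝ)) (isOpen_Ioi.preimage g.continuous)
  have hx1 : x ∈ r ⁻¹' (g ⁻¹' Set.Iio (1/3 : ℝ)) := by
    simp only [Set.mem_preimage, hfix x hx, Set.mem_Iio, hg0 hxF]
    norm_num
  have hy2 : y ∈ r ⁻¹' (g ⁻¹' Set.Ioi (2/3 : ℝ)) := by
    simp only [Set.mem_preimage, hfix y hy, Set.mem_Ioi, hg1 hyG]
    norm_num
  rw [hM₁] at hx1
  rw [hM₂] at hy2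
  obtain ⟨Nx, hNxM, hxNx⟩ := hx1
  obtain ⟨Ny, hNyM, hyNy⟩ := hy2
  have hNx1 : Nx ⊆ r ⁻¹' (g ⁻¹' Set.Iio (1/3 : ℝ)) := hM₁ ▸ Set.subset_sUnion_of_mem hNxM
  have hNy2 : Ny ⊆ r ⁻¹' (g ⁻¹' Set.Ioi (2/3 : ℝ)) := hM₂ ▸ Set.subset_sUnion_of_mem hNyM
  have hclx : closure Nx ⊆ {z | g (r z) ≤ 1/3} := by
    apply closure_minimal
    · intro z hz
      have h := hNx1 hz
      simp only [Set.mem_preimage, Set.mem_Iio] at h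
      exact le_of_lt h
    · exact isClosed_le (g.continuous.comp hr) continuous_const
  have hcly : closure Ny ⊆ {z | (2:ℝ)/3 ≤ g (r z)} := by
    apply closure_minimal
    · intro z hz
      have h := hNy2 hz
      simp only [Set.mem_preimage, Set.mem_Ioi] at h
      exact le_of_lt h
    · exact isClosed_le continuous_const (g.continuous.comp hr)
  refine ⟨Nx, hM₁N hNxM, Ny, hM₂N hNyM, hxNx, hyNy, ?_, ⟨fun z => g (r z),
    g.continuous.comp hr, ⟨1, fun z => ?_⟩, ?_, ?_⟩⟩
  · apply Set.eq_empty_of_forall_notMem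
    rintro z ⟨hz1, hz2⟩
    have h1 := hclx hz1
    have h2 := hcly hz2
    simp only [Set.mem_setOf_eq] at h1 h2
    linarith
  · have := hg01 (r z)
    rw [abs_le]
    constructor <;> linarith [this.1, this.2]
  · show g (r x) = 0
    rw [hfix x hx]; exact hg0 hxF
  · show g (r y) = 1
    rw [hfix y hy]; exact hg1 hyG
end
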